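/- Let Ω ⊂ ℝⁿ be bounded, {u_j}_{j=1}^k an L²(Ω)-orthonormal family, φ̂_j the Fourier transforms of their zero extensions, and h(z) := ∑_{j=1}^k |φ̂_j(z)|². Then |∇h(z)| ≤ 2(2π)^{-n} √(V(Ω) I(Ω)) for every z ∈ ℝⁿ, where V(Ω) is the volume and I(Ω) = ∫_Ω |x|² dx the moment of inertia of Ω (center of mass at the origin). -/

import Mathlib

/-!
With `e_z(x) = exp(i⟨x, z⟩)`, the value `φ̂_j(z)` and the directional derivative `∂_w φ̂_j(z)`
are `(2π)^{-n/2}` times the `L²(Ω)` inner products of `u_j` with `e_z` and with `i⟨x, w⟩ e_z(x)`.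
Hence `|∂_w h(z)| ≤ 2 ∑_j |φ̂_j(z)| |∂_w φ̂_j(z)|`, and Cauchy–Schwarz over `j` followed by Bessel's
inequality for the orthonormal family `u_j` bounds this by `2 (2π)^{-n} ‖e_z‖ ‖i⟨·, w⟩ e_z‖`,
where `‖e_z‖² = V(Ω)` and `‖i⟨·, w⟩ e_z‖² ≤ I(Ω) |w|²`.
-/

open MeasureTheory Set

/-- The Fourier transform of the extension by zero of `u : Ω → ℝ`. -/
noncomputable def phihat {n : ℕ} (Ω : Set (EuclideanSpace ℝ (Fin n)))
    (u : EuclideanSpace ℝ (Fin n) → ℝ) (z : EuclideanSpace ℝ (Fin n)) : ℂ :=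
  (2 * Real.pi) ^ (-((n : ℝ) / 2)) •
    ∫ x in Ω, (u x : ℂ) * Complex.exp (Complex.I * ((inner ℝ x z : ℝ) : ℂ))

open scoped ComplexConjugate

namespace MeasureTheory.MemLp

variable {α 𝕜 : Type*} [MeasurableSpace α] {ν : Measure α} [RCLike 𝕜] {f g : α → 𝕜}

theorem inner_toLp_toLp (hf : MemLp f 2 ν) (hg : MemLp g 2 ν) :
    inner 𝕜 (hf.toLp f) (hg.toLp g) = ∫ x, conj (f x) * g x ∂ν := by
  rw [L2.inner_def]
  refine integral_congr_ae ?_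
  filter_upwards [hf.coeFn_toLp, hg.coeFn_toLp] with x hfx hgx
  rw [hfx, hgx, RCLike.inner_apply, mul_comm]

theorem norm_toLp_sq (hf : MemLp f 2 ν) : ‖hf.toLp f‖ ^ 2 = ∫ x, ‖f x‖ ^ 2 ∂ν := by
  have hconj (x : α) : conj (f x) * f x = ((‖f x‖ ^ 2 : ℝ) : 𝕜) := by
    rw [RCLike.conj_mul]; norm_cast
  rw [norm_sq_eq_re_inner (𝕜 := 𝕜), hf.inner_toLp_toLp hf]
  simp_rw [hconj]
  rw [integral_ofReal, RCLike.ofReal_re]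

end MeasureTheory.MemLp

theorem Orthonormal.sum_norm_inner_mul_norm_inner_le {𝕜 E ι : Type*} [RCLike 𝕜]
    [NormedAddCommGroup E] [InnerProductSpace 𝕜 E] {v : ι → E} (hv : Orthonormal 𝕜 v)
    (a b : E) (s : Finset ι) :
    ∑ i ∈ s, ‖inner 𝕜 (v i) a‖ * ‖inner 𝕜 (v i) b‖ ≤ ‖a‖ * ‖b‖ := by
  have bessel (x : E) : √(∑ i ∈ s, ‖inner 𝕜 (v i) x‖ ^ 2) ≤ ‖x‖ :=
    (Real.sqrt_le_left (norm_nonneg x)).2 (hv.sum_inner_products_le x)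
  exact (Real.sum_mul_le_sqrt_mul_sqrt s _ _).trans
    (mul_le_mul (bessel a) (bessel b) (Real.sqrt_nonneg _) (norm_nonneg a))

theorem sum_norm_integral_mul_le_sqrt_mul_sqrt {α ι : Type*} [MeasurableSpace α]
    [DecidableEq ι] {ν : Measure α} {u : ι → α → ℝ} (hu : ∀ j, MemLp (u j) 2 ν)
    (hortho : ∀ i j, ∫ x, u i x * u j x ∂ν = if i = j then 1 else 0)
    {f g : α → ℂ} (hf : MemLp f 2 ν) (hg : MemLp g 2 ν) (s : Finset ι) :
    ∑ j ∈ s, ‖∫ x, u j x * f x ∂ν‖ * ‖∫ x, u j x * g x ∂ν‖ ≤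
      √(∫ x, ‖f x‖ ^ 2 ∂ν) * √(∫ x, ‖g x‖ ^ 2 ∂ν) := by
  let v (j : ι) : Lp ℂ 2 ν := ((hu j).ofReal (K := ℂ)).toLp fun x => (u j x : ℂ)
  have hinner (j : ι) {f : α → ℂ} (hf : MemLp f 2 ν) :
      inner ℂ (v j) (hf.toLp f) = ∫ x, u j x * f x ∂ν := by
    simp only [v, MemLp.inner_toLp_toLp, Complex.conj_ofReal]
  have hnorm {f : α → ℂ} (hf : MemLp f 2 ν) : ‖hf.toLp f‖ = √(∫ x, ‖f x‖ ^ 2 ∂ν) := by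
    rw [← hf.norm_toLp_sq, Real.sqrt_sq (norm_nonneg _)]
  have hv : Orthonormal ℂ v := by
    refine orthonormal_iff_ite.2 fun i j => ?_
    rw [hinner]
    simp_rw [← Complex.ofReal_mul, integral_complex_ofReal, hortho]
    split_ifs <;> simp
  simpa only [hinner, hnorm] using hv.sum_norm_inner_mul_norm_inner_le (hf.toLp f) (hg.toLp g) s

section Bounded

variable {X F : Type*} [PseudoMetricSpace X] [ProperSpace X] [MeasurableSpace X]
  [OpensMeasurableSpace X] {μ : Measure X} [IsFiniteMeasureOnCompacts μ] [NormedAddCommGroup F]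
  {f : X → F} {Ω : Set X}

theorem Continuous.memLp_restrict_of_isBounded (hf : Continuous f) (hΩ : Bornology.IsBounded Ω)
    (p : ENNReal) : MemLp f p (μ.restrict Ω) := by
  have hK : IsCompact (closure Ω) := hΩ.isCompact_closure
  have : IsFiniteMeasure (μ.restrict (closure Ω)) :=
    isFiniteMeasure_restrict.2 hK.measure_lt_top.ne
  obtain ⟨C, hC⟩ := hK.exists_bound_of_continuousOn hf.continuousOn
  exact (MemLp.of_bound hf.aestronglyMeasurable C
    ((ae_restrict_mem isClosed_closure.measurableSet).mono hC)).mono_measure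
      (Measure.restrict_mono subset_closure le_rfl)

theorem Continuous.integrableOn_of_isBounded (hf : Continuous f)
    (hΩ : Bornology.IsBounded Ω) : IntegrableOn f Ω μ :=
  memLp_one_iff_integrable.1 (hf.memLp_restrict_of_isBounded hΩ 1)

end Bounded

section PlaneWave

variable {E : Type*} [NormedAddCommGroup E] [InnerProductSpace ℝ E]

noncomputable def planeWave (z x : E) : ℂ := Complex.exp (Complex.I * (inner ℝ x z : ℂ))

theorem norm_planeWave (z x : E) : ‖planeWave z x‖ = 1 := Complex.norm_exp_I_mul_ofReal _

@[fun_prop]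
theorem continuous_planeWave (z : E) : Continuous (planeWave z) := by
  unfold planeWave; fun_prop

theorem hasFDerivAt_planeWave (x z : E) :
    HasFDerivAt (planeWave · x)
      (planeWave z x • Complex.I • Complex.ofRealCLM.comp (innerSL ℝ x)) z :=
  ((Complex.ofRealCLM.comp (innerSL ℝ x)).hasFDerivAt.const_mul Complex.I).cexp

variable [MeasurableSpace E] {μ : Measure E} {Ω : Set E}

theorem setIntegral_norm_planeWave_sq (z : E) :
    ∫ x in Ω, ‖planeWave z x‖ ^ 2 ∂μ = μ.real Ω := by
  simp [norm_planeWave]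

variable [BorelSpace E] [ProperSpace E] [IsFiniteMeasureOnCompacts μ]

theorem setIntegral_norm_inner_mul_planeWave_sq_le (hΩ : Bornology.IsBounded Ω) (z w : E) :
    ∫ x in Ω, ‖Complex.I * inner ℝ x w * planeWave z x‖ ^ 2 ∂μ ≤
      (∫ x in Ω, ‖x‖ ^ 2 ∂μ) * ‖w‖ ^ 2 := by
  rw [← integral_mul_const]
  refine integral_mono_of_nonneg (.of_forall fun x => by positivity)
    ((by fun_prop : Continuous fun x : E => ‖x‖ ^ 2 * ‖w‖ ^ 2).integrableOn_of_isBounded hΩ)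
    (.of_forall fun x => ?_)
  simp only [norm_mul, Complex.norm_I, Complex.norm_real, norm_planeWave, one_mul, mul_one,
    Real.norm_eq_abs, ← mul_pow]
  exact pow_le_pow_left₀ (abs_nonneg _) (abs_real_inner_le_norm x w) 2

theorem hasFDerivAt_setIntegral_mul_planeWave {u : E → ℂ} (hu : Continuous u)
    (hΩ : Bornology.IsBounded Ω) (z : E) :
    ∃ D : E →L[ℝ] ℂ, HasFDerivAt (fun z => ∫ x in Ω, u x * planeWave z x ∂μ) D z ∧
      ∀ w, D w = ∫ x in Ω, u x * (Complex.I * inner ℝ x w * planeWave z x) ∂μ := by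
  let F' (z x : E) : E →L[ℝ] ℂ :=
    u x • planeWave z x • Complex.I • Complex.ofRealCLM.comp (innerSL ℝ x)
  have hF' : Continuous (F' z) := by fun_prop
  have hbound (z x : E) : ‖F' z x‖ ≤ ‖u x‖ * ‖x‖ := by
    simp only [F', norm_smul, norm_planeWave, Complex.norm_I, one_mul]
    gcongr
    exact (Complex.ofRealCLM.opNorm_comp_le _).trans (by simp)
  refine ⟨∫ x in Ω, F' z x ∂μ, hasFDerivAt_integral_of_dominated_of_fderiv_le
    (F' := F') (bound := fun x => ‖u x‖ * ‖x‖) Filter.univ_mem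
    (.of_forall fun z => (hu.mul (continuous_planeWave z)).aestronglyMeasurable)
    ((hu.mul (continuous_planeWave z)).integrableOn_of_isBounded hΩ) hF'.aestronglyMeasurable
    (.of_forall fun x z _ => hbound z x)
    ((by fun_prop : Continuous fun x => ‖u x‖ * ‖x‖).integrableOn_of_isBounded hΩ)
    (.of_forall fun x z _ => (hasFDerivAt_planeWave x z).const_mul (u x)), fun w => ?_⟩
  rw [ContinuousLinearMap.integral_apply (hF'.integrableOn_of_isBounded hΩ)]
  congr! 2 with x
  simp only [F', smul_apply, ContinuousLinearMap.comp_apply, coe_innerSL_apply,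
    Complex.ofRealCLM_apply, smul_eq_mul]
  ring

theorem sum_norm_setIntegral_mul_planeWave_le {ι : Type*} [DecidableEq ι] {u : ι → E → ℝ}
    (hu : ∀ j, Continuous (u j))
    (hortho : ∀ i j, ∫ x in Ω, u i x * u j x ∂μ = if i = j then 1 else 0)
    (hΩ : Bornology.IsBounded Ω) (s : Finset ι) (z w : E) :
    ∑ j ∈ s, ‖∫ x in Ω, u j x * planeWave z x ∂μ‖ *
        ‖∫ x in Ω, u j x * (Complex.I * inner ℝ x w * planeWave z x) ∂μ‖ ≤
      √(μ.real Ω * ∫ x in Ω, ‖x‖ ^ 2 ∂μ) * ‖w‖ := by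
  have hmemLp {f : E → ℂ} (hf : Continuous f) : MemLp f 2 (μ.restrict Ω) :=
    hf.memLp_restrict_of_isBounded hΩ 2
  calc _ ≤ √(∫ x in Ω, ‖planeWave z x‖ ^ 2 ∂μ) *
          √(∫ x in Ω, ‖Complex.I * inner ℝ x w * planeWave z x‖ ^ 2 ∂μ) :=
        sum_norm_integral_mul_le_sqrt_mul_sqrt
          (fun j => (hu j).memLp_restrict_of_isBounded hΩ 2) hortho
          (hmemLp (continuous_planeWave z)) (hmemLp (by fun_prop)) s
    _ ≤ √(μ.real Ω) * √((∫ x in Ω, ‖x‖ ^ 2 ∂μ) * ‖w‖ ^ 2) := by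
        rw [setIntegral_norm_planeWave_sq]
        gcongr
        exact setIntegral_norm_inner_mul_planeWave_sq_le hΩ z w
    _ = _ := by
        rw [Real.sqrt_mul' _ (sq_nonneg _), Real.sqrt_sq (norm_nonneg w),
          Real.sqrt_mul measureReal_nonneg, mul_assoc]

end PlaneWave

theorem norm_fderiv_sum_norm_sq_apply_le {G F ι : Type*} [NormedAddCommGroup G]
    [NormedSpace ℝ G] [NormedAddCommGroup F] [InnerProductSpace ℝ F] {f : ι → G → F}
    {f' : ι → G →L[ℝ] F} {s : Finset ι} {z : G} (hf : ∀ j ∈ s, HasFDerivAt (f j) (f' j) z)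
    (w : G) :
    ‖fderiv ℝ (fun y => ∑ j ∈ s, ‖f j y‖ ^ 2) z w‖ ≤ 2 * ∑ j ∈ s, ‖f j z‖ * ‖f' j w‖ := by
  rw [(HasFDerivAt.fun_sum fun j hj => (hf j hj).norm_sq).fderiv, sum_apply, Finset.mul_sum]
  refine (norm_sum_le _ _).trans (Finset.sum_le_sum fun j _ => ?_)
  simp only [smul_apply, ContinuousLinearMap.comp_apply, innerSL_apply_apply, nsmul_eq_mul,
    Nat.cast_ofNat, norm_mul, Real.norm_ofNat]
  exact mul_le_mul_of_nonneg_left (norm_inner_le_norm _ _) zero_le_two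

theorem phihat_eq_smul_setIntegral {n : ℕ} (Ω : Set (EuclideanSpace ℝ (Fin n)))
    (u : EuclideanSpace ℝ (Fin n) → ℝ) (z : EuclideanSpace ℝ (Fin n)) :
    phihat Ω u z = (2 * Real.pi) ^ (-((n : ℝ) / 2)) • ∫ x in Ω, (u x : ℂ) * planeWave z x :=
  rfl

theorem gradient_h_bound_general (n k : ℕ) (Ω : Set (EuclideanSpace ℝ (Fin n)))
    (hbd : Bornology.IsBounded Ω)
    (u : ℕ → EuclideanSpace ℝ (Fin n) → ℝ) (hcont : ∀ j, Continuous (u j))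
    (hortho : ∀ i j, ∫ x in Ω, u i x * u j x = if i = j then (1 : ℝ) else 0)
    (z : EuclideanSpace ℝ (Fin n)) :
    ‖fderiv ℝ (fun w => ∑ j ∈ Finset.range k, ‖phihat Ω (u j) w‖ ^ 2) z‖ ≤
      2 * (2 * Real.pi) ^ (-(n : ℝ)) *
        Real.sqrt ((volume Ω).toReal * ∫ x in Ω, ‖x‖ ^ 2) := by
  set c : ℝ := (2 * Real.pi) ^ (-((n : ℝ) / 2)) with hc_def
  have hc0 : 0 ≤ c := by positivity
  have hc : c ^ 2 = (2 * Real.pi) ^ (-(n : ℝ)) := by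
    rw [← Real.rpow_natCast, ← Real.rpow_mul (by positivity)]
    norm_num
  choose D hD hDw using fun j =>
    hasFDerivAt_setIntegral_mul_planeWave (μ := volume) (u := fun x => (u j x : ℂ))
      (by fun_prop) hbd z
  refine ContinuousLinearMap.opNorm_le_bound _ (by positivity) fun w => ?_
  calc _ ≤ 2 * ∑ j ∈ Finset.range k, ‖phihat Ω (u j) z‖ * ‖(c • D j) w‖ :=
        norm_fderiv_sum_norm_sq_apply_le (fun j _ => (hD j).const_smul c) w
    _ = 2 * c ^ 2 * ∑ j ∈ Finset.range k, ‖∫ x in Ω, u j x * planeWave z x‖ *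
          ‖∫ x in Ω, u j x * (Complex.I * inner ℝ x w * planeWave z x)‖ := by
        simp only [phihat_eq_smul_setIntegral, ← hc_def, hDw, smul_apply, norm_smul,
          Real.norm_of_nonneg hc0, Finset.mul_sum]
        exact Finset.sum_congr rfl fun j _ => by ring
    _ ≤ 2 * c ^ 2 * (√(volume.real Ω * ∫ x in Ω, ‖x‖ ^ 2) * ‖w‖) := by
        gcongr
        exact sum_norm_setIntegral_mul_planeWave_le hcont hortho hbd _ z w
    _ = _ := by rw [hc, measureReal_def]; ring

/-- Gradient bound (2.14) for `h(z) = ∑_{j=1}^k |φ̂_j(z)|²`. -/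
theorem gradient_h_bound (n k : ℕ) (Ω : Set (EuclideanSpace ℝ (Fin n)))
    (hΩ : MeasurableSet Ω) (hbd : Bornology.IsBounded Ω)
    (hcm : (∫ x in Ω, x : EuclideanSpace ℝ (Fin n)) = 0)
    (u : ℕ → EuclideanSpace ℝ (Fin n) → ℝ) (hcont : ∀ j, Continuous (u j))
    (hortho : ∀ i j, ∫ x in Ω, u i x * u j x = if i = j then (1 : ℝ) else 0)
    (z : EuclideanSpace ℝ (Fin n)) :
    ‖fderiv ℝ (fun w => ∑ j ∈ Finset.range k, ‖phihat Ω (u j) w‖ ^ 2) z‖ ≤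
      2 * (2 * Real.pi) ^ (-(n : ℝ)) *
        Real.sqrt ((volume Ω).toReal * ∫ x in Ω, ‖x‖ ^ 2) :=
  gradient_h_bound_general n k Ω hbd u hcont hortho z
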